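/- arXiv:0902.0496 — 4 statements merged into one kernel-verified Lean document; each statement's English description precedes it below -/
import Mathlib

section
/- Let y be locally integrable on ℝ with y(t) = 0 for t < 0. Then for almost every t, the fractional integral I^γ y(t) = (1/Γ(γ)) ∫_0^t (t−τ)^{γ−1} y(τ) dτ converges to y(t) as γ → 0⁺. -/
/-!
At a left Lebesgue point `t > 0` of `y`, with `c = y t`,
`I^γ y(t) = c t^γ / Γ(γ+1) + γ / Γ(γ+1) · ∫₀ᵗ (t-τ)^(γ-1) (y τ - c) dτ`,
and the first term tends to `c`. In the remaining integral, the part over `(0, t-δ]` has kernel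
at most `δ^(γ-1)` and is killed by the factor `γ`. Near `t`, the dyadic shells `[t - 2s, t - s)`,
`s = δ / 2^(k+1)`, carry mass `∫ |y - c| ≤ 2εs` and kernel at most `s^(γ-1)`, so together they
contribute a geometric series of total `O(ε δ^γ / γ)`, which the factor `γ` turns into `O(ε)`.
For `t < 0` both sides vanish.
-/

open MeasureTheory Filter

/-- The Riemann–Liouville fractional integral of order `γ > 0` with lower terminal `0`. -/
noncomputable def fracInt (γ : ℝ) (y : ℝ → ℝ) (t : ℝ) : ℝ :=
  (1 / Real.Gamma γ) * ∫ τ in (0:ℝ)..t, (t - τ) ^ (γ - 1) * y τ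

open Set
open scoped ENNReal Topology

theorem MeasureTheory.LocallyIntegrable.ae_eventually_lintegral_Icc_enorm_sub_le {E : Type*}
    [NormedAddCommGroup E] {f : ℝ → E} (hf : LocallyIntegrable f) :
    ∀ᵐ t, ∀ ε > 0, ∀ᶠ x in 𝓝[<] t,
      ∫⁻ τ in Icc x t, ‖f τ - f t‖ₑ ≤ ENNReal.ofReal (ε * (t - x)) := by
  filter_upwards
    [(IsUnifLocDoublingMeasure.vitaliFamily volume 1).ae_tendsto_lintegral_enorm_sub_div hf]
    with t ht ε hε
  filter_upwards [(ht.comp (Real.tendsto_Icc_vitaliFamily_left t)).eventually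
    (gt_mem_nhds (ENNReal.ofReal_pos.2 hε)), self_mem_nhdsWithin] with x hx (hxt : x < t)
  rw [Function.comp_apply, Real.volume_Icc,
    ENNReal.div_lt_iff (.inl (by simpa using hxt)) (.inl ENNReal.ofReal_ne_top),
    ← ENNReal.ofReal_mul hε.le] at hx
  exact hx.le

lemma intervalIntegrable_sub_rpow {γ : ℝ} (hγ : 0 < γ) (a b : ℝ) :
    IntervalIntegrable (fun τ => (b - τ) ^ (γ - 1)) volume a b := by
  simpa using ((intervalIntegral.intervalIntegrable_rpow' (r := γ - 1) (by linarith)).comp_sub_left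
    b : IntervalIntegrable _ volume (b - (b - a)) (b - 0))

lemma integral_sub_rpow {γ : ℝ} (hγ : 0 < γ) (a b : ℝ) :
    ∫ τ in a..b, (b - τ) ^ (γ - 1) = (b - a) ^ γ / γ := by
  rw [intervalIntegral.integral_comp_sub_left (fun x => x ^ (γ - 1)), sub_self,
    integral_rpow (Or.inl (by linarith)), sub_add_cancel, Real.zero_rpow hγ.ne', sub_zero]

lemma fracInt_eq_of_intervalIntegrable {y : ℝ → ℝ} {γ t : ℝ} (c : ℝ) (hγ : 0 < γ)
    (hint : IntervalIntegrable (fun τ => (t - τ) ^ (γ - 1) * (y τ - c)) volume 0 t) :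
    fracInt γ y t = c * (t ^ γ / Real.Gamma (γ + 1)) +
      (γ * ∫ τ in (0:ℝ)..t, (t - τ) ^ (γ - 1) * (y τ - c)) / Real.Gamma (γ + 1) := by
  have hsplit : (fun τ => (t - τ) ^ (γ - 1) * y τ) =
      fun τ => (t - τ) ^ (γ - 1) * (y τ - c) + c * (t - τ) ^ (γ - 1) := by
    ext; ring
  rw [fracInt, hsplit, intervalIntegral.integral_add hint
    ((intervalIntegrable_sub_rpow hγ 0 t).const_mul c), intervalIntegral.integral_const_mul,
    integral_sub_rpow hγ, sub_zero, Real.Gamma_add_one hγ.ne']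
  field_simp
  ring

lemma fracInt_of_neg {y : ℝ → ℝ} (hy0 : ∀ τ < 0, y τ = 0) {t : ℝ} (ht : t < 0)
    (γ : ℝ) :
    fracInt γ y t = 0 := by
  rw [fracInt, intervalIntegral.integral_congr_ae (g := fun _ => 0) ?_,
    intervalIntegral.integral_zero, mul_zero]
  filter_upwards [Measure.ae_ne volume 0] with τ hτ0 hτ
  rw [uIoc_of_ge ht.le] at hτ
  simp [hy0 τ (lt_of_le_of_ne hτ.2 hτ0)]

lemma enorm_rpow_sub_mul {t τ : ℝ} (hτ : τ ≤ t) (γ z : ℝ) :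
    ‖(t - τ) ^ (γ - 1) * z‖ₑ = ENNReal.ofReal ((t - τ) ^ (γ - 1)) * ‖z‖ₑ := by
  rw [enorm_mul, Real.enorm_of_nonneg (Real.rpow_nonneg (sub_nonneg.2 hτ) _)]

lemma tendsto_Gamma_add_one_nhdsGT_zero :
    Tendsto (fun γ => Real.Gamma (γ + 1)) (𝓝[>] 0) (𝓝 1) := by
  have hcont : ContinuousAt (fun γ => Real.Gamma (γ + 1)) 0 := by
    refine (Real.differentiableAt_Gamma fun m => ?_).continuousAt.comp
      (continuous_add_const 1).continuousAt
    have : (0:ℝ) ≤ m := m.cast_nonneg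
    rw [zero_add]; linarith
  simpa [Real.Gamma_one] using hcont.tendsto.mono_left nhdsWithin_le_nhds

lemma two_mul_div_two_pow_succ (δ : ℝ) (k : ℕ) : 2 * (δ / 2 ^ (k + 1)) = δ / 2 ^ k := by
  rw [pow_succ]; field_simp

lemma Ico_sub_subset_iUnion_Ico_dyadic (t δ : ℝ) :
    Ico (t - δ) t ⊆ ⋃ k : ℕ, Ico (t - 2 * (δ / 2 ^ (k + 1))) (t - δ / 2 ^ (k + 1)) := by
  intro τ ⟨hτδ, hτt⟩
  have hpos : 0 < t - τ := sub_pos.2 hτt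
  obtain ⟨k, hk, hk1⟩ := exists_nat_pow_near (x := δ / (t - τ))
    ((one_le_div hpos).2 (by linarith)) one_lt_two
  rw [le_div_iff₀ hpos] at hk
  rw [div_lt_iff₀ hpos] at hk1
  refine mem_iUnion.2 ⟨k, ?_, ?_⟩
  · rw [two_mul_div_two_pow_succ, sub_le_comm, le_div_iff₀ (by positivity)]
    linarith
  · have : δ / 2 ^ (k + 1) < t - τ := (div_lt_iff₀ (by positivity)).2 (by linarith)
    linarith

section KernelEstimates

variable {G : ℝ → ℝ≥0∞} {a s t δ ε γ : ℝ}

lemma setLIntegral_Ico_shell_rpow_sub_mul_le (hs : 0 < s) (hsδ : 2 * s ≤ δ) (hγ1 : γ ≤ 1)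
    (hG : ∀ x ∈ Ico (t - δ) t, ∫⁻ τ in Icc x t, G τ ≤ ENNReal.ofReal (ε * (t - x))) :
    ∫⁻ τ in Ico (t - 2 * s) (t - s), ENNReal.ofReal ((t - τ) ^ (γ - 1)) * G τ ≤
      ENNReal.ofReal (2 * ε * s ^ γ) := by
  calc ∫⁻ τ in Ico (t - 2 * s) (t - s), ENNReal.ofReal ((t - τ) ^ (γ - 1)) * G τ
      ≤ ∫⁻ τ in Ico (t - 2 * s) (t - s), ENNReal.ofReal (s ^ (γ - 1)) * G τ := by
        refine setLIntegral_mono' measurableSet_Ico fun τ hτ => ?_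
        have hkernel : (t - τ) ^ (γ - 1) ≤ s ^ (γ - 1) :=
          Real.rpow_le_rpow_of_nonpos hs (by linarith [hτ.2]) (by linarith)
        gcongr
    _ ≤ ENNReal.ofReal (s ^ (γ - 1)) * ∫⁻ τ in Icc (t - 2 * s) t, G τ := by
        rw [lintegral_const_mul' _ _ ENNReal.ofReal_ne_top]
        gcongr
        exact Ico_subset_Icc_self.trans (Icc_subset_Icc_right (by linarith))
    _ ≤ ENNReal.ofReal (s ^ (γ - 1)) * ENNReal.ofReal (ε * (2 * s)) := by
        gcongr
        simpa using hG (t - 2 * s) ⟨by linarith, by linarith⟩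
    _ = ENNReal.ofReal (2 * ε * s ^ γ) := by
        rw [← ENNReal.ofReal_mul (by positivity)]
        congr 1
        rw [Real.rpow_sub_one hs.ne']
        field_simp

lemma div_one_sub_inv_two_rpow_le {γ : ℝ} (hγ : 0 < γ) :
    ((2:ℝ) ^ γ)⁻¹ / (1 - ((2:ℝ) ^ γ)⁻¹) ≤ 1 / (γ * Real.log 2) := by
  have hexp : γ * Real.log 2 + 1 ≤ (2:ℝ) ^ γ := by
    rw [Real.rpow_def_of_pos two_pos, mul_comm]
    exact Real.add_one_le_exp _
  have hlog : 0 < γ * Real.log 2 := mul_pos hγ (Real.log_pos one_lt_two)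
  have h2 : 1 < (2:ℝ) ^ γ := by linarith
  rw [div_le_div_iff₀ (by simp [inv_lt_one_of_one_lt₀ h2]) hlog]
  field_simp
  linarith

lemma setLIntegral_Ioc_near_rpow_sub_mul_le (hδ : 0 < δ) (hε : 0 ≤ ε) (hγ : 0 < γ)
    (hγ1 : γ ≤ 1)
    (hG : ∀ x ∈ Ico (t - δ) t, ∫⁻ τ in Icc x t, G τ ≤ ENNReal.ofReal (ε * (t - x))) :
    ∫⁻ τ in Ioc (t - δ) t, ENNReal.ofReal ((t - τ) ^ (γ - 1)) * G τ ≤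
      ENNReal.ofReal (2 * ε * δ ^ γ / (γ * Real.log 2)) := by
  set r : ℝ := ((2:ℝ) ^ γ)⁻¹
  have hr0 : 0 ≤ r := by positivity
  have hr1 : r < 1 := inv_lt_one_of_one_lt₀ (Real.one_lt_rpow one_lt_two hγ)
  have hshell (k : ℕ) : (δ / 2 ^ (k + 1)) ^ γ = δ ^ γ * r * r ^ k := by
    rw [Real.div_rpow hδ.le (by positivity), ← Real.rpow_pow_comm two_pos.le, mul_assoc,
      ← pow_succ', inv_pow, div_eq_mul_inv]
  rw [← setLIntegral_congr Ioo_ae_eq_Ioc]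
  calc ∫⁻ τ in Ioo (t - δ) t, ENNReal.ofReal ((t - τ) ^ (γ - 1)) * G τ
      ≤ ∑' k : ℕ, ∫⁻ τ in Ico (t - 2 * (δ / 2 ^ (k + 1))) (t - δ / 2 ^ (k + 1)),
          ENNReal.ofReal ((t - τ) ^ (γ - 1)) * G τ :=
        (lintegral_mono_set
          (Ioo_subset_Ico_self.trans (Ico_sub_subset_iUnion_Ico_dyadic t δ))).trans
            (lintegral_iUnion_le _ _)
    _ ≤ ∑' k : ℕ, ENNReal.ofReal (2 * ε * δ ^ γ * r * r ^ k) := by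
        refine ENNReal.tsum_le_tsum fun k => ?_
        have hsδ : 2 * (δ / 2 ^ (k + 1)) ≤ δ := by
          rw [two_mul_div_two_pow_succ]
          exact div_le_self hδ.le (one_le_pow₀ one_le_two)
        calc _ ≤ ENNReal.ofReal (2 * ε * (δ / 2 ^ (k + 1)) ^ γ) :=
              setLIntegral_Ico_shell_rpow_sub_mul_le (by positivity) hsδ hγ1 hG
          _ = _ := by rw [hshell]; ring_nf
    _ = ENNReal.ofReal (2 * ε * δ ^ γ * (r / (1 - r))) := by
        rw [← ENNReal.ofReal_tsum_of_nonneg (fun k => by positivity)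
          ((summable_geometric_of_lt_one hr0 hr1).mul_left _), tsum_mul_left,
          tsum_geometric_of_lt_one hr0 hr1, div_eq_mul_inv r, mul_assoc]
    _ ≤ ENNReal.ofReal (2 * ε * δ ^ γ / (γ * Real.log 2)) := by
        rw [div_eq_mul_one_div (2 * ε * δ ^ γ)]
        gcongr ENNReal.ofReal (_ * ?_)
        exact div_one_sub_inv_two_rpow_le hγ

lemma setLIntegral_Ioc_rpow_sub_mul_le (hδ : 0 < δ) (hε : 0 ≤ ε) (hγ : 0 < γ) (hγ1 : γ ≤ 1)
    (hG : ∀ x ∈ Ico (t - δ) t, ∫⁻ τ in Icc x t, G τ ≤ ENNReal.ofReal (ε * (t - x))) :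
    ∫⁻ τ in Ioc a t, ENNReal.ofReal ((t - τ) ^ (γ - 1)) * G τ ≤
      ENNReal.ofReal (δ ^ (γ - 1)) * (∫⁻ τ in Ioc a t, G τ) +
        ENNReal.ofReal (2 * ε * δ ^ γ / (γ * Real.log 2)) := by
  have hfar : ∫⁻ τ in Ioc a (t - δ), ENNReal.ofReal ((t - τ) ^ (γ - 1)) * G τ ≤
      ENNReal.ofReal (δ ^ (γ - 1)) * ∫⁻ τ in Ioc a t, G τ := by
    calc ∫⁻ τ in Ioc a (t - δ), ENNReal.ofReal ((t - τ) ^ (γ - 1)) * G τ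
        ≤ ∫⁻ τ in Ioc a (t - δ), ENNReal.ofReal (δ ^ (γ - 1)) * G τ := by
          refine setLIntegral_mono' measurableSet_Ioc fun τ hτ => ?_
          have hkernel : (t - τ) ^ (γ - 1) ≤ δ ^ (γ - 1) :=
            Real.rpow_le_rpow_of_nonpos hδ (by linarith [hτ.2]) (by linarith)
          gcongr
      _ ≤ ENNReal.ofReal (δ ^ (γ - 1)) * ∫⁻ τ in Ioc a t, G τ := by
          rw [lintegral_const_mul' _ _ ENNReal.ofReal_ne_top]
          gcongr
          exact sub_le_self t hδ.le
  calc ∫⁻ τ in Ioc a t, ENNReal.ofReal ((t - τ) ^ (γ - 1)) * G τ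
      ≤ ∫⁻ τ in Ioc a (t - δ) ∪ Ioc (t - δ) t,
          ENNReal.ofReal ((t - τ) ^ (γ - 1)) * G τ :=
        lintegral_mono_set Ioc_subset_Ioc_union_Ioc
    _ ≤ _ := (lintegral_union_le _ _ _).trans
        (add_le_add hfar (setLIntegral_Ioc_near_rpow_sub_mul_le hδ hε hγ hγ1 hG))

theorem tendsto_ofReal_mul_setLIntegral_Ioc_rpow_sub_mul (hfin : ∫⁻ τ in Ioc a t, G τ ≠ ∞)
    (hG : ∀ ε > 0, ∀ᶠ x in 𝓝[<] t,
      ∫⁻ τ in Icc x t, G τ ≤ ENNReal.ofReal (ε * (t - x))) :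
    Tendsto (fun γ => ENNReal.ofReal γ *
      ∫⁻ τ in Ioc a t, ENNReal.ofReal ((t - τ) ^ (γ - 1)) * G τ) (𝓝[>] 0) (𝓝 0) := by
  refine ENNReal.tendsto_nhds_zero.2 fun η hη => ?_
  obtain ⟨e, -, he0, heη⟩ := ENNReal.lt_iff_exists_real_btwn.1 hη
  rw [ENNReal.ofReal_pos] at he0
  have hlog : 0 < Real.log 2 := Real.log_pos one_lt_two
  -- chosen so that `γ` times the near-field bound `2εδ^γ / (γ log 2)` is at most `e / 2`
  set ε := e * Real.log 2 / 4 with hεdef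
  have hε : 0 < ε := by positivity
  obtain ⟨δ, hδ0, hδ1, hδ⟩ : ∃ δ, 0 < δ ∧ δ ≤ 1 ∧
      ∀ x ∈ Ico (t - δ) t, ∫⁻ τ in Icc x t, G τ ≤ ENNReal.ofReal (ε * (t - x)) := by
    obtain ⟨l, hl, hsub⟩ := mem_nhdsLT_iff_exists_Ico_subset.1 (hG ε hε)
    refine ⟨min (t - l) 1, lt_min (sub_pos.2 hl) one_pos, min_le_right _ _,
      fun x hx => hsub ⟨?_, hx.2⟩⟩
    linarith [min_le_left (t - l) 1, hx.1]
  have hfar : Tendsto (fun γ => ENNReal.ofReal (γ * δ ^ (γ - 1)) * ∫⁻ τ in Ioc a t, G τ)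
      (𝓝[>] 0) (𝓝 0) := by
    have : Tendsto (fun γ : ℝ => γ * δ ^ (γ - 1)) (𝓝 0) (𝓝 (0 * δ ^ ((0:ℝ) - 1))) :=
      tendsto_id.mul ((Real.continuousAt_const_rpow hδ0.ne').tendsto.comp
        (tendsto_id.sub_const 1))
    simpa using ENNReal.Tendsto.mul_const (ENNReal.tendsto_ofReal
      (this.mono_left nhdsWithin_le_nhds)) (.inr hfin)
  filter_upwards [hfar.eventually_lt_const (ENNReal.ofReal_pos.2 (half_pos he0)),
    Ioo_mem_nhdsGT one_pos] with γ hfarγ ⟨hγ0, hγ1⟩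
  calc ENNReal.ofReal γ * ∫⁻ τ in Ioc a t, ENNReal.ofReal ((t - τ) ^ (γ - 1)) * G τ
      ≤ ENNReal.ofReal γ * (ENNReal.ofReal (δ ^ (γ - 1)) * (∫⁻ τ in Ioc a t, G τ) +
          ENNReal.ofReal (2 * ε * δ ^ γ / (γ * Real.log 2))) := by
        gcongr
        exact setLIntegral_Ioc_rpow_sub_mul_le hδ0 hε.le hγ0 hγ1.le hδ
    _ = ENNReal.ofReal (γ * δ ^ (γ - 1)) * (∫⁻ τ in Ioc a t, G τ) +
          ENNReal.ofReal (e / 2 * δ ^ γ) := by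
        rw [mul_add, ← mul_assoc, ← ENNReal.ofReal_mul hγ0.le, ← ENNReal.ofReal_mul hγ0.le,
          hεdef]
        congr 2
        field_simp
        ring
    _ ≤ ENNReal.ofReal (e / 2) + ENNReal.ofReal (e / 2) := by
        gcongr
        exact mul_le_of_le_one_right (by positivity) (Real.rpow_le_one hδ0.le hδ1 hγ0.le)
    _ = ENNReal.ofReal e := by
        rw [← ENNReal.ofReal_add (by positivity) (by positivity), add_halves]
    _ ≤ η := heη.le

end KernelEstimates

theorem tendsto_fracInt_of_eventually_lintegral_Icc_le {y : ℝ → ℝ} {t : ℝ} (ht : 0 < t)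
    (hy : IntegrableOn y (Ioc 0 t))
    (hleb : ∀ ε > 0, ∀ᶠ x in 𝓝[<] t,
      ∫⁻ τ in Icc x t, ‖y τ - y t‖ₑ ≤ ENNReal.ofReal (ε * (t - x))) :
    Tendsto (fun γ => fracInt γ y t) (𝓝[>] 0) (𝓝 (y t)) := by
  set c := y t
  set I : ℝ → ℝ≥0∞ := fun γ =>
    ∫⁻ τ in Ioc 0 t, ENNReal.ofReal ((t - τ) ^ (γ - 1)) * ‖y τ - c‖ₑ
  have hI : Tendsto (fun γ => ENNReal.ofReal γ * I γ) (𝓝[>] 0) (𝓝 0) :=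
    tendsto_ofReal_mul_setLIntegral_Ioc_rpow_sub_mul
      (hy.sub (integrableOn_const measure_Ioc_lt_top.ne)).hasFiniteIntegral.ne hleb
  have hI_eq (γ : ℝ) : ∫⁻ τ in Ioc 0 t, ‖(t - τ) ^ (γ - 1) * (y τ - c)‖ₑ = I γ :=
    setLIntegral_congr_fun measurableSet_Ioc fun τ hτ => enorm_rpow_sub_mul hτ.2 γ _
  set R : ℝ → ℝ := fun γ => γ * ∫ τ in (0:ℝ)..t, (t - τ) ^ (γ - 1) * (y τ - c)
  have hR : ∀ γ > 0, ‖R γ‖ₑ ≤ ENNReal.ofReal γ * I γ := by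
    intro γ hγ
    rw [enorm_mul, Real.enorm_of_nonneg hγ.le, intervalIntegral.integral_of_le ht.le, ← hI_eq]
    gcongr
    exact enorm_integral_le_lintegral_enorm _
  have hR0 : Tendsto R (𝓝[>] 0) (𝓝 0) :=
    tendsto_zero_iff_enorm_tendsto_zero.2 (tendsto_of_tendsto_of_tendsto_of_le_of_le'
      tendsto_const_nhds hI (Eventually.of_forall fun _ => zero_le)
      (eventually_mem_nhdsWithin.mono hR))
  have heq : ∀ᶠ γ in 𝓝[>] 0,
      c * (t ^ γ / Real.Gamma (γ + 1)) + R γ / Real.Gamma (γ + 1) = fracInt γ y t := by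
    filter_upwards [hI.eventually_lt_const ENNReal.zero_lt_top, self_mem_nhdsWithin]
      with γ hfin (hγ : 0 < γ)
    refine (fracInt_eq_of_intervalIntegrable c hγ ?_).symm
    rw [intervalIntegrable_iff_integrableOn_Ioc_of_le ht.le]
    refine ⟨(Measurable.aestronglyMeasurable (by fun_prop)).mul
      (hy.aestronglyMeasurable.sub aestronglyMeasurable_const), ?_⟩
    rw [hasFiniteIntegral_iff_enorm, hI_eq]
    exact ENNReal.lt_top_of_mul_ne_top_right hfin.ne (by simpa using hγ)
  have hpow : Tendsto (fun γ : ℝ => t ^ γ) (𝓝[>] 0) (𝓝 1) := by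
    simpa using ((Real.continuousAt_const_rpow ht.ne' (b := 0)).tendsto).mono_left
      nhdsWithin_le_nhds
  refine Tendsto.congr' heq ?_
  simpa using (tendsto_const_nhds.mul (hpow.div tendsto_Gamma_add_one_nhdsGT_zero one_ne_zero)).add
    (hR0.div tendsto_Gamma_add_one_nhdsGT_zero one_ne_zero)

/-- For `y` locally integrable on `ℝ` vanishing on `(-∞,0)`, the fractional integral
`I^γ y(t)` converges to `y(t)` as `γ → 0⁺`, for almost every `t`. -/
theorem fracInt_tendsto_ae (y : ℝ → ℝ) (hy : LocallyIntegrable y volume)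
    (hy0 : ∀ t < (0:ℝ), y t = 0) :
    ∀ᵐ t : ℝ ∂volume,
      Tendsto (fun γ : ℝ => fracInt γ y t) (nhdsWithin 0 (Set.Ioi 0)) (nhds (y t)) := by
  filter_upwards [hy.ae_eventually_lintegral_Icc_enorm_sub_le, Measure.ae_ne volume 0]
    with t hleb ht0
  rcases ht0.lt_or_gt with ht | ht
  · simp only [fracInt_of_neg hy0 ht, hy0 t ht]
    exact tendsto_const_nhds
  · exact tendsto_fracInt_of_eventually_lintegral_Icc_le ht
      ((hy.integrableOn_isCompact isCompact_Icc).mono_set Ioc_subset_Icc_self) hleb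
end

section
/- Let r : (0,∞) → ℝ be measurable with r(s)/s integrable near 0 and r(s) = O(s^{−γ₀}) as s → ∞ for some γ₀ > 0. Define l₀(t) = (1/π) ∫_0^∞ e^{−st} r(s) ds for t > 0. Then l₀ is locally integrable on (0,∞), and for 0 ≤ a ≤ b, ∫_a^b l₀(t) dt = (1/π) ∫_0^∞ (e^{−sa} − e^{−sb}) r(s)/s ds. -/
/-!
Since `∫_a^b e^{-st} dt = (e^{-sa} - e^{-sb}) / s ∈ [0, 1/s]` for `s > 0`, integrability of
`r(s)/s` on `(0,∞)` makes `e^{-st} r(s)` absolutely integrable on `(a,b] × (0,∞)`, and Fubini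
gives both claims. The hypotheses control `r(s)/s` near `0` and near `∞` only. If it fails to be
integrable on `(0,∞)`, it fails on a compact `[1, M]`, where the weights `e^{-st}` and
`(e^{-sa} - e^{-sb}) / s` are continuous and nonvanishing; then no integrand over `(0,∞)` in the
statement is integrable, every such integral takes the junk value `0`, and both claims are trivial.
-/

open MeasureTheory Set

theorem IntegrableOn.of_continuousOn_mul {X 𝕜 : Type*} [TopologicalSpace X] [T2Space X]
    [MeasurableSpace X] [OpensMeasurableSpace X] [NormedField 𝕜]
    [SecondCountableTopologyEither X 𝕜] {μ : Measure X} {f φ : X → 𝕜} {K : Set X}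
    (hK : IsCompact K) (hφ : ContinuousOn φ K) (hφ0 : ∀ x ∈ K, φ x ≠ 0)
    (hf : IntegrableOn (fun x => φ x * f x) K μ) : IntegrableOn f K μ :=
  (hf.continuousOn_mul (hφ.inv₀ hφ0) hK).congr_fun
    (fun x hx => inv_mul_cancel_left₀ (hφ0 x hx) (f x)) hK.measurableSet

theorem integrableOn_div_Ioi_of_abs_le_rpow {r : ℝ → ℝ} {γ C M : ℝ} (hγ : 0 < γ)
    (hM : 0 < M) (hmeas : Measurable r) (hbound : ∀ s ≥ M, |r s| ≤ C * s ^ (-γ)) :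
    IntegrableOn (fun s => r s / s) (Ioi M) := by
  refine ((integrableOn_Ioi_rpow_of_lt (a := -γ - 1) (by linarith) hM).const_mul C).mono'
    (hmeas.div measurable_id).aestronglyMeasurable
    ((ae_restrict_iff' measurableSet_Ioi).2 (.of_forall fun s (hs : M < s) => ?_))
  have hs0 : 0 < s := hM.trans hs
  calc ‖r s / s‖ = |r s| / s := by rw [Real.norm_eq_abs, abs_div, abs_of_pos hs0]
    _ ≤ C * s ^ (-γ) / s := by gcongr; exact hbound s hs.le
    _ = C * s ^ (-γ - 1) := by rw [Real.rpow_sub hs0, Real.rpow_one, mul_div_assoc]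

theorem integrableOn_div_Ioi_of_integrableOn_Icc {r : ℝ → ℝ} {γ C M : ℝ} (hγ : 0 < γ)
    (hM : 1 ≤ M) (hmeas : Measurable r) (h0 : IntegrableOn (fun s => r s / s) (Ioc 0 1))
    (hbound : ∀ s ≥ M, |r s| ≤ C * s ^ (-γ))
    (hmid : IntegrableOn (fun s => r s / s) (Icc 1 M)) :
    IntegrableOn (fun s => r s / s) (Ioi 0) := by
  rw [← Ioc_union_Ioi_eq_Ioi (zero_le_one.trans hM), ← Ioc_union_Ioc_eq_Ioc zero_le_one hM]
  exact (h0.union (hmid.mono_set Ioc_subset_Icc_self)).union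
    (integrableOn_div_Ioi_of_abs_le_rpow hγ (zero_lt_one.trans_le hM) hmeas hbound)

theorem not_integrableOn_mul_of_not_integrableOn_div {r φ : ℝ → ℝ} {γ C s₀ : ℝ}
    (hγ : 0 < γ) (hmeas : Measurable r) (h0 : IntegrableOn (fun s => r s / s) (Ioc 0 1))
    (hbound : ∀ s ≥ s₀, |r s| ≤ C * s ^ (-γ))
    (hr : ¬ IntegrableOn (fun s => r s / s) (Ioi 0))
    (hφ : ContinuousOn φ (Ioi 0)) (hφ0 : ∀ s ∈ Ioi 0, φ s ≠ 0) :
    ¬ IntegrableOn (fun s => φ s * r s) (Ioi 0) := by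
  intro hφr
  have hpos : Icc 1 (max s₀ 1) ⊆ Ioi 0 := fun s hs => zero_lt_one.trans_le hs.1
  refine hr (integrableOn_div_Ioi_of_integrableOn_Icc hγ (le_max_right s₀ 1) hmeas h0
    (fun s hs => hbound s (le_of_max_le_left hs)) ?_)
  refine IntegrableOn.of_continuousOn_mul (φ := fun s => s * φ s) isCompact_Icc
    ((continuousOn_id.mul hφ).mono hpos)
    (fun s hs => mul_ne_zero (mem_Ioi.1 (hpos hs)).ne' (hφ0 s (hpos hs))) ?_
  refine (hφr.mono_set hpos).congr_fun (fun s hs => ?_) measurableSet_Icc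
  field_simp [(mem_Ioi.1 (hpos hs)).ne']

theorem integral_exp_neg_mul_mul_Ioc {s : ℝ} (hs : s ≠ 0) {a b : ℝ} (hab : a ≤ b)
    (c : ℝ) : ∫ t in Ioc a b, Real.exp (-s * t) * c
      = (Real.exp (-s * a) - Real.exp (-s * b)) * c / s := by
  rw [integral_mul_const, ← intervalIntegral.integral_of_le hab,
    intervalIntegral.integral_comp_mul_left Real.exp (neg_ne_zero.2 hs), integral_exp,
    smul_eq_mul]
  field_simp
  ring

theorem norm_exp_neg_mul_sub_exp_neg_mul_le_one {s a b : ℝ} (hs : 0 ≤ s) (ha : 0 ≤ a)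
    (hab : a ≤ b) : ‖Real.exp (-s * a) - Real.exp (-s * b)‖ ≤ 1 := by
  have hba : Real.exp (-s * b) ≤ Real.exp (-s * a) := Real.exp_le_exp.2 (by nlinarith)
  have ha1 : Real.exp (-s * a) ≤ 1 := Real.exp_le_one_iff.2 (by nlinarith)
  rw [Real.norm_of_nonneg (sub_nonneg.2 hba)]
  linarith [Real.exp_pos (-s * b)]

theorem integrable_prod_exp_neg_mul {r : ℝ → ℝ} (hmeas : Measurable r)
    (hr : IntegrableOn (fun s => r s / s) (Ioi 0)) {a b : ℝ} (ha : 0 ≤ a) (hab : a ≤ b) :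
    Integrable (Function.uncurry fun t s => Real.exp (-s * t) * r s)
      ((volume.restrict (Ioc a b)).prod (volume.restrict (Ioi 0))) := by
  have hmeas' : Measurable fun s => Real.exp (-s * a) - Real.exp (-s * b) := by fun_prop
  refine (integrable_prod_iff' (by fun_prop)).2
    ⟨.of_forall fun s =>
      (by fun_prop : Continuous fun t => Real.exp (-s * t) * r s).integrableOn_Ioc, ?_⟩
  have hdom :
      IntegrableOn (fun s => (Real.exp (-s * a) - Real.exp (-s * b)) * ‖r s / s‖) (Ioi 0) :=
    hr.norm.bdd_mul (c := 1) hmeas'.aestronglyMeasurable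
      (ae_restrict_of_forall_mem measurableSet_Ioi
        fun s (hs : 0 < s) => norm_exp_neg_mul_sub_exp_neg_mul_le_one hs.le ha hab)
  refine hdom.congr_fun (fun s (hs : 0 < s) => ?_) measurableSet_Ioi
  simp only [Function.uncurry_apply_pair, norm_mul, Real.norm_of_nonneg (Real.exp_pos _).le]
  rw [integral_exp_neg_mul_mul_Ioc hs.ne' hab, norm_div, Real.norm_of_nonneg hs.le, mul_div_assoc]

theorem integral_Ioc_integral_exp_neg_mul {r : ℝ → ℝ} (hmeas : Measurable r)
    (hr : IntegrableOn (fun s => r s / s) (Ioi 0)) {a b : ℝ} (ha : 0 ≤ a) (hab : a ≤ b) :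
    ∫ t in Ioc a b, ∫ s in Ioi (0 : ℝ), Real.exp (-s * t) * r s
      = ∫ s in Ioi (0 : ℝ), (Real.exp (-s * a) - Real.exp (-s * b)) * r s / s := by
  rw [integral_integral_swap (integrable_prod_exp_neg_mul hmeas hr ha hab)]
  exact setIntegral_congr_fun measurableSet_Ioi
    fun s (hs : 0 < s) => integral_exp_neg_mul_mul_Ioc hs.ne' hab (r s)

theorem locallyIntegrableOn_integral_exp_neg_mul {r : ℝ → ℝ} (hmeas : Measurable r)
    (hr : IntegrableOn (fun s => r s / s) (Ioi 0)) :
    LocallyIntegrableOn (fun t => ∫ s in Ioi (0 : ℝ), Real.exp (-s * t) * r s) (Ioi 0) := by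
  intro x (hx : 0 < x)
  exact ⟨Ioc 0 (x + 1), inter_mem_nhdsWithin _ (Iic_mem_nhds (lt_add_one x)),
    (integrable_prod_exp_neg_mul hmeas hr le_rfl (by linarith)).integral_prod_left⟩

/-- Let `r : (0,∞) → ℝ` be measurable, with `r(s)/s` integrable near `0` and
`r(s) = O(s^(-γ₀))` at `∞` for some `γ₀ > 0`.  Then
`l₀(t) = (1/π) ∫_0^∞ e^(-st) r(s) ds` is locally integrable on `(0,∞)` and for
`0 ≤ a ≤ b`, `∫_a^b l₀ = (1/π) ∫_0^∞ (e^(-sa) - e^(-sb)) r(s)/s ds`. -/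
theorem l0_locallyIntegrable (r : ℝ → ℝ) (γ₀ : ℝ) (hγ₀ : 0 < γ₀)
    (hmeas : Measurable r)
    (h0 : IntegrableOn (fun s => r s / s) (Set.Ioc 0 1) volume)
    (hinfty : ∃ C s₀ : ℝ, 0 < s₀ ∧ ∀ s ≥ s₀, |r s| ≤ C * s ^ (-γ₀)) :
    LocallyIntegrableOn (fun t => (1 / Real.pi) * ∫ s in Set.Ioi (0:ℝ), Real.exp (-s * t) * r s)
      (Set.Ioi 0) volume ∧
    ∀ a b : ℝ, 0 ≤ a → a ≤ b →
      ∫ t in a..b, (1 / Real.pi) * ∫ s in Set.Ioi (0:ℝ), Real.exp (-s * t) * r s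
        = (1 / Real.pi) * ∫ s in Set.Ioi (0:ℝ),
            (Real.exp (-s * a) - Real.exp (-s * b)) * r s / s := by
  by_cases hr : IntegrableOn (fun s => r s / s) (Ioi 0)
  · refine ⟨(locallyIntegrableOn_integral_exp_neg_mul hmeas hr).smul (1 / Real.pi),
      fun a b ha hab => ?_⟩
    rw [intervalIntegral.integral_const_mul, intervalIntegral.integral_of_le hab,
      integral_Ioc_integral_exp_neg_mul hmeas hr ha hab]
  obtain ⟨C, s₀, -, hbound⟩ := hinfty
  have hnot {φ : ℝ → ℝ} :=
    not_integrableOn_mul_of_not_integrableOn_div (φ := φ) hγ₀ hmeas h0 hbound hr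
  have hzero : EqOn (fun t => (1 / Real.pi) * ∫ s in Ioi (0:ℝ), Real.exp (-s * t) * r s) 0
      (Ioi 0) := fun t _ => by
    dsimp only [Pi.zero_apply]
    rw [integral_undef (hnot (by fun_prop) fun s _ => (Real.exp_pos _).ne'), mul_zero]
  refine ⟨(integrableOn_zero.congr_fun hzero.symm measurableSet_Ioi).locallyIntegrableOn,
    fun a b ha hab => ?_⟩
  rcases hab.eq_or_lt with rfl | hlt
  · simp
  have hφ : ContinuousOn (fun s => (Real.exp (-s * a) - Real.exp (-s * b)) / s) (Ioi 0) := by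
    fun_prop (disch := exact fun s (hs : 0 < s) => hs.ne')
  have hφ0 : ∀ s ∈ Ioi (0 : ℝ), (Real.exp (-s * a) - Real.exp (-s * b)) / s ≠ 0 :=
    fun s (hs : 0 < s) =>
      div_ne_zero (sub_ne_zero.2 (Real.exp_lt_exp.2 (by nlinarith)).ne') hs.ne'
  simp_rw [mul_div_right_comm _ (r _)]
  rw [integral_undef (hnot hφ hφ0), intervalIntegral.integral_of_le hab,
    setIntegral_congr_fun measurableSet_Ioc fun t ht => hzero (ha.trans_lt ht.1)]
  simp
end

section
/- For α ∈ (0,1) and λ > 0, the function l(t) = L^{−1}(1/(s^α + λ))(t), given explicitly for t > 0 by l(t) = (1/π) ∫_0^∞ e^{−st} (λ s^α sin(απ))/(s^{2α} + 2λ s^α cos(απ) + λ²) ds, is nonnegative, continuous on (0,∞), and locally integrable on [0,∞). -/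
/-!
For `s > 0` the denominator is `|s^α e^{iαπ} + λ|² = (s^α cos απ + λ)² + (s^α sin απ)²`, so the
density `λ s^α sin(απ) / (…)` is nonnegative and at most `(λ / sin απ) s^(-α)`. The Laplace
transform of a nonnegative kernel bounded by `C s^(-β)` with `0 < β < 1` is continuous on `(0, ∞)`
by dominated convergence, and is bounded by `C Γ(1 - β) t^(β - 1)`, which is integrable at `0`.
-/

open MeasureTheory Set Real Filter Topology

section LaplaceTransform

variable {k : ℝ → ℝ} {C β t : ℝ}

lemma integrableOn_rpow_neg_mul_exp (hβ : β < 1) (ht : 0 < t) :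
    IntegrableOn (fun s : ℝ => s ^ (-β) * exp (-s * t)) (Ioi 0) := by
  simpa [mul_comm] using integrableOn_rpow_mul_exp_neg_mul_rpow (by linarith : -1 < -β) one_pos ht

lemma integral_rpow_neg_mul_exp (hβ : β < 1) (ht : 0 < t) :
    ∫ s in Ioi 0, s ^ (-β) * exp (-s * t) = Gamma (1 - β) * t ^ (β - 1) := by
  have h := integral_rpow_mul_exp_neg_mul_Ioi (sub_pos.2 hβ) ht
  rw [sub_sub_cancel_left, one_div, inv_rpow ht.le, ← rpow_neg ht.le, neg_sub] at h
  simpa [mul_comm] using h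

lemma laplace_nonneg (hk0 : ∀ s > 0, 0 ≤ k s) : 0 ≤ ∫ s in Ioi 0, exp (-s * t) * k s :=
  setIntegral_nonneg measurableSet_Ioi fun s hs => mul_nonneg (exp_pos _).le (hk0 s hs)

lemma laplace_le_of_le_rpow (hk0 : ∀ s > 0, 0 ≤ k s) (hkC : ∀ s > 0, k s ≤ C * s ^ (-β))
    (hβ : β < 1) (ht : 0 < t) :
    ∫ s in Ioi 0, exp (-s * t) * k s ≤ C * Gamma (1 - β) * t ^ (β - 1) := by
  calc ∫ s in Ioi 0, exp (-s * t) * k s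
      ≤ ∫ s in Ioi 0, C * (s ^ (-β) * exp (-s * t)) := by
        refine integral_mono_of_nonneg ?_ ((integrableOn_rpow_neg_mul_exp hβ ht).const_mul C) ?_
        · filter_upwards [ae_restrict_mem measurableSet_Ioi] with s hs
          exact mul_nonneg (exp_pos _).le (hk0 s hs)
        · filter_upwards [ae_restrict_mem measurableSet_Ioi] with s hs
          calc exp (-s * t) * k s ≤ exp (-s * t) * (C * s ^ (-β)) :=
                mul_le_mul_of_nonneg_left (hkC s hs) (exp_pos _).le
            _ = C * (s ^ (-β) * exp (-s * t)) := by ring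
    _ = C * Gamma (1 - β) * t ^ (β - 1) := by
        rw [integral_const_mul, integral_rpow_neg_mul_exp hβ ht, mul_assoc]

lemma continuousOn_laplace (hk : AEStronglyMeasurable k (volume.restrict (Ioi 0)))
    (hk0 : ∀ s > 0, 0 ≤ k s) (hkC : ∀ s > 0, k s ≤ C * s ^ (-β)) (hβ : β < 1) :
    ContinuousOn (fun t => ∫ s in Ioi 0, exp (-s * t) * k s) (Ioi 0) := by
  intro t₀ ht₀
  refine ContinuousAt.continuousWithinAt <| continuousAt_of_dominated
    (bound := fun s => C * (s ^ (-β) * exp (-s * (t₀ / 2)))) ?_ ?_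
    ((integrableOn_rpow_neg_mul_exp hβ (half_pos ht₀)).const_mul C) ?_
  · exact Eventually.of_forall fun t => (by fun_prop : Continuous fun s => exp (-s * t))
      |>.aestronglyMeasurable.mul hk
  · filter_upwards [lt_mem_nhds (half_lt_self ht₀)] with t ht
    filter_upwards [ae_restrict_mem measurableSet_Ioi] with s (hs : 0 < s)
    have hdecay : exp (-s * t) ≤ exp (-s * (t₀ / 2)) := exp_le_exp.2 (by nlinarith)
    rw [norm_of_nonneg (mul_nonneg (exp_pos _).le (hk0 s hs))]
    calc exp (-s * t) * k s ≤ exp (-s * (t₀ / 2)) * (C * s ^ (-β)) :=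
          mul_le_mul hdecay (hkC s hs) (hk0 s hs) (exp_pos _).le
      _ = C * (s ^ (-β) * exp (-s * (t₀ / 2))) := by ring
  · exact ae_of_all _ fun s => ((continuous_exp.comp (by fun_prop)).mul continuous_const).continuousAt

lemma integrableOn_Ioc_laplace (hk : AEStronglyMeasurable k (volume.restrict (Ioi 0)))
    (hk0 : ∀ s > 0, 0 ≤ k s) (hkC : ∀ s > 0, k s ≤ C * s ^ (-β)) (hβ0 : 0 < β) (hβ1 : β < 1)
    (T : ℝ) :
    IntegrableOn (fun t => ∫ s in Ioi 0, exp (-s * t) * k s) (Ioc 0 T) := by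
  have hpow : IntegrableOn (fun t : ℝ => C * Gamma (1 - β) * t ^ (β - 1)) (Ioc 0 T) :=
    ((intervalIntegral.intervalIntegrable_rpow' (by linarith)).1).const_mul _
  refine hpow.mono' (((continuousOn_laplace hk hk0 hkC hβ1).mono
    fun _ ht => ht.1).aestronglyMeasurable measurableSet_Ioc) ?_
  filter_upwards [ae_restrict_mem measurableSet_Ioc] with t ht
  rw [norm_of_nonneg (laplace_nonneg hk0)]
  exact laplace_le_of_le_rpow hk0 hkC hβ1 ht.1

end LaplaceTransform

lemma sq_mul_sin_le_sq_add_two_mul_mul_cos_add_sq (x y θ : ℝ) :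
    (x * sin θ) ^ 2 ≤ x ^ 2 + 2 * y * x * cos θ + y ^ 2 := by
  nlinarith [sq_nonneg (x * cos θ + y), sin_sq_add_cos_sq θ]

lemma sq_add_two_mul_mul_cos_add_sq_pos {x y θ : ℝ} (hy : y ≠ 0) (hθ : sin θ ≠ 0) :
    0 < x ^ 2 + 2 * y * x * cos θ + y ^ 2 := by
  have hle := sq_mul_sin_le_sq_add_two_mul_mul_cos_add_sq y x θ
  nlinarith [pow_pos (abs_pos.2 (mul_ne_zero hy hθ)) 2, sq_abs (y * sin θ)]

section SalphaKernel

variable {α lam s : ℝ}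

lemma rpow_two_mul_eq_sq (hs : 0 ≤ s) : s ^ (2 * α) = (s ^ α) ^ 2 := by
  rw [mul_comm, rpow_mul hs, rpow_two]

lemma sin_mul_pi_pos (hα0 : 0 < α) (hα1 : α < 1) : 0 < sin (α * π) :=
  sin_pos_of_pos_of_lt_pi (by positivity) (by nlinarith [pi_pos])

lemma salpha_kernel_nonneg (hα0 : 0 < α) (hα1 : α < 1) (hlam : 0 < lam) (hs : 0 < s) :
    0 ≤ lam * s ^ α * sin (α * π) /
      (s ^ (2 * α) + 2 * lam * s ^ α * cos (α * π) + lam ^ 2) := by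
  have hsin := sin_mul_pi_pos hα0 hα1
  rw [rpow_two_mul_eq_sq hs.le]
  exact div_nonneg (by positivity) (sq_add_two_mul_mul_cos_add_sq_pos hlam.ne' hsin.ne').le

lemma salpha_kernel_le_rpow_neg (hα0 : 0 < α) (hα1 : α < 1) (hlam : 0 < lam) (hs : 0 < s) :
    lam * s ^ α * sin (α * π) / (s ^ (2 * α) + 2 * lam * s ^ α * cos (α * π) + lam ^ 2) ≤
      lam / sin (α * π) * s ^ (-α) := by
  have hsin := sin_mul_pi_pos hα0 hα1
  have hx : 0 < s ^ α := rpow_pos_of_pos hs α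
  rw [rpow_two_mul_eq_sq hs.le, rpow_neg hs.le]
  calc lam * s ^ α * sin (α * π) / ((s ^ α) ^ 2 + 2 * lam * s ^ α * cos (α * π) + lam ^ 2)
      ≤ lam * s ^ α * sin (α * π) / (s ^ α * sin (α * π)) ^ 2 :=
        div_le_div_of_nonneg_left (by positivity) (by positivity)
          (sq_mul_sin_le_sq_add_two_mul_mul_cos_add_sq _ _ _)
    _ = lam / sin (α * π) * (s ^ α)⁻¹ := by field_simp

end SalphaKernel

/-- For `α ∈ (0,1)` and `λ > 0`, the inverse Laplace transform of `1/(s^α + λ)`,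
given for `t > 0` by
`l(t) = (1/π) ∫_0^∞ e^(-st) λ s^α sin(απ) / (s^(2α) + 2λ s^α cos(απ) + λ²) ds`,
is nonnegative, continuous on `(0,∞)` and locally integrable on `[0,∞)`. -/
theorem inverse_laplace_salpha_lambda (α lam : ℝ) (hα0 : 0 < α) (hα1 : α < 1)
    (hlam : 0 < lam) :
    (∀ t > (0:ℝ), 0 ≤ (1 / Real.pi) * ∫ s in Set.Ioi (0:ℝ),
        Real.exp (-s * t) * (lam * s ^ α * Real.sin (α * Real.pi)) /
          (s ^ (2 * α) + 2 * lam * s ^ α * Real.cos (α * Real.pi) + lam ^ 2)) ∧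
    ContinuousOn (fun t : ℝ => (1 / Real.pi) * ∫ s in Set.Ioi (0:ℝ),
        Real.exp (-s * t) * (lam * s ^ α * Real.sin (α * Real.pi)) /
          (s ^ (2 * α) + 2 * lam * s ^ α * Real.cos (α * Real.pi) + lam ^ 2))
      (Set.Ioi 0) ∧
    ∀ T > (0:ℝ), IntegrableOn (fun t : ℝ => (1 / Real.pi) * ∫ s in Set.Ioi (0:ℝ),
        Real.exp (-s * t) * (lam * s ^ α * Real.sin (α * Real.pi)) /
          (s ^ (2 * α) + 2 * lam * s ^ α * Real.cos (α * Real.pi) + lam ^ 2))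
      (Set.Ioc 0 T) volume := by
  set k : ℝ → ℝ := fun s =>
    lam * s ^ α * sin (α * π) / (s ^ (2 * α) + 2 * lam * s ^ α * cos (α * π) + lam ^ 2)
  have hk : AEStronglyMeasurable k (volume.restrict (Ioi 0)) :=
    (by fun_prop : Measurable k).aestronglyMeasurable
  have hk0 : ∀ s > 0, 0 ≤ k s := fun s hs => salpha_kernel_nonneg hα0 hα1 hlam hs
  have hkC : ∀ s > 0, k s ≤ lam / sin (α * π) * s ^ (-α) :=
    fun s hs => salpha_kernel_le_rpow_neg hα0 hα1 hlam hs
  have hL : ∀ t, ∫ s in Ioi 0, exp (-s * t) * (lam * s ^ α * sin (α * π)) /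
      (s ^ (2 * α) + 2 * lam * s ^ α * cos (α * π) + lam ^ 2) =
      ∫ s in Ioi 0, exp (-s * t) * k s := fun t => by simp only [k, mul_div_assoc]
  simp only [hL]
  exact ⟨fun t _ => mul_nonneg (by positivity) (laplace_nonneg hk0),
    continuousOn_const.mul (continuousOn_laplace hk hk0 hkC hα1),
    fun T _ => (integrableOn_Ioc_laplace hk hk0 hkC hα0 hα1 T).const_mul _⟩
end

section
/- Let F : ℝ → ℂ be continuous, supported in [0,∞), with |F(x)| ≤ C(1+|x|)^k for some C > 0 and k ∈ ℕ. Then for every φ in the Schwartz space S(ℝ), the map γ ↦ ∫_ℝ (f_γ * F)(x) φ(x) dx, γ > 0, where f_γ(x) = H(x)x^{γ−1}/Γ(γ), is a smooth (infinitely differentiable) function of γ on (0,∞). -/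
open MeasureTheory

namespace PairingSmoothAux

open Set Filter

/-- polynomial times Schwartz function is integrable -/
lemma schwartz_poly_integrable (φ : SchwartzMap ℝ ℂ) (m : ℕ) :
    Integrable (fun x : ℝ => (1 + |x|) ^ m * ‖φ x‖) := by
  have h1 : Integrable (fun x : ℝ => (2:ℝ) ^ m * ‖φ x‖) :=
    (φ.integrable.norm.const_mul _)
  have h2 : Integrable (fun x : ℝ => (2:ℝ) ^ m * (‖x‖ ^ m * ‖φ x‖)) :=
    ((φ.integrable_pow_mul volume m).const_mul _)
  refine (h1.add h2).mono' ?_ (ae_of_all _ fun x => ?_)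
  · exact ((continuous_const.add continuous_abs).pow m |>.mul φ.continuous.norm
      ).aestronglyMeasurable
  · have hx : (0:ℝ) ≤ |x| := abs_nonneg x
    have hb : (1 + |x|) ^ m ≤ 2 ^ m * (1 + |x| ^ m) := by
      have h3 : (1 + |x|) ^ m ≤ (2 * max 1 |x|) ^ m := by
        apply pow_le_pow_left₀ (by positivity)
        have := le_max_left (1:ℝ) |x|
        have := le_max_right (1:ℝ) |x|
        linarith
      have h4 : (2 * max 1 |x|) ^ m = 2 ^ m * (max 1 |x|) ^ m := mul_pow ..
      have h5 : (max 1 |x|) ^ m ≤ 1 + |x| ^ m := by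
        rcases max_cases (1:ℝ) |x| with ⟨h, _⟩ | ⟨h, _⟩ <;> rw [h] <;>
          simp [one_pow] <;> positivity
      calc (1 + |x|) ^ m ≤ 2 ^ m * (max 1 |x|) ^ m := by rw [← h4]; exact h3
        _ ≤ 2 ^ m * (1 + |x| ^ m) := by gcongr
    have hnn : ‖(1 + |x|) ^ m * ‖φ x‖‖ = (1 + |x|) ^ m * ‖φ x‖ := by
      rw [Real.norm_eq_abs, abs_of_nonneg (by positivity)]
    rw [hnn]
    calc (1 + |x|) ^ m * ‖φ x‖ ≤ (2 ^ m * (1 + |x| ^ m)) * ‖φ x‖ := by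
          gcongr
      _ = 2 ^ m * ‖φ x‖ + 2 ^ m * (‖x‖ ^ m * ‖φ x‖) := by
          rw [Real.norm_eq_abs]; ring

/-- Schwartz decay bound -/
lemma schwartz_decay (φ : SchwartzMap ℝ ℂ) (n : ℕ) :
    ∃ D : ℝ, 0 < D ∧ ∀ y : ℝ, (1 + |y|) ^ n * ‖φ y‖ ≤ D := by
  set S : ℝ :=
    (Finset.Iic (n, 0)).sup (fun m => SchwartzMap.seminorm ℝ (E := ℝ) (F := ℂ) m.1 m.2) φ
    with hS
  have hS0 : 0 ≤ S := apply_nonneg _ _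
  refine ⟨2 ^ n * S + 1, by positivity, fun y => ?_⟩
  have := φ.one_add_le_sup_seminorm_apply (𝕜 := ℝ) (m := (n, 0)) (k := n) (n := 0)
    le_rfl le_rfl y
  simp only [norm_iteratedFDeriv_zero, Real.norm_eq_abs] at this
  rw [← hS] at this
  linarith

end PairingSmoothAux

set_option maxHeartbeats 1000000 in
open PairingSmoothAux Set Filter in
/-- Let `F : ℝ → ℂ` be continuous, supported in `[0,∞)`, of polynomial growth.
Then for every Schwartz function `φ`, the map
`γ ↦ ∫_ℝ (f_γ * F)(x) φ(x) dx`, where `f_γ(x) = H(x) x^(γ-1)/Γ(γ)` and `*` is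
the half-line convolution, is smooth on `(0,∞)`. -/
theorem pairing_smooth_in_gamma (F : ℝ → ℂ) (hF : Continuous F)
    (hF0 : ∀ x < (0:ℝ), F x = 0)
    (hgrowth : ∃ (C : ℝ) (k : ℕ), 0 < C ∧ ∀ x : ℝ, ‖F x‖ ≤ C * (1 + |x|) ^ k)
    (φ : SchwartzMap ℝ ℂ) :
    ContDiffOn ℝ (⊤ : ℕ∞)
      (fun γ : ℝ => ∫ x in Set.Ioi (0:ℝ),
        (∫ τ in (0:ℝ)..x, (((x - τ) ^ (γ - 1) / Real.Gamma γ : ℝ) : ℂ) * F τ) * φ x)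
      (Set.Ioi 0) := by
  obtain ⟨C, k, hC, hFk⟩ := hgrowth
  set Ψ : ℝ → ℂ := fun u => ∫ τ in Set.Ioi (0:ℝ), F τ * φ (u + τ) with hΨdef
  -- pointwise domination
  have hBptwise : ∀ N : ℕ, ∃ D : ℝ, 0 < D ∧ ∀ u : ℝ, 0 ≤ u → ∀ τ : ℝ, 0 ≤ τ →
      ‖F τ * φ (u + τ)‖ ≤ (D * ((1 + u) ^ N)⁻¹) * (1 + τ ^ 2)⁻¹ := by
    intro N
    obtain ⟨D₀, hD₀, hdecay⟩ := schwartz_decay φ (k + N + 2)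
    refine ⟨C * D₀, by positivity, fun u hu τ hτ => ?_⟩
    have hA : (0:ℝ) < 1 + u + τ := by linarith
    have habs : |u + τ| = u + τ := abs_of_nonneg (by linarith)
    have hφ : ‖φ (u + τ)‖ ≤ D₀ / (1 + u + τ) ^ (k + N + 2) := by
      rw [le_div_iff₀ (by positivity)]
      have := hdecay (u + τ)
      rw [habs] at this
      calc ‖φ (u+τ)‖ * (1 + u + τ) ^ (k+N+2)
          = (1 + (u + τ)) ^ (k+N+2) * ‖φ (u+τ)‖ := by ring_nf
        _ ≤ D₀ := this
    have hsplit : (1 + τ) ^ k * ((1 + u) ^ N * (1 + τ ^ 2)) ≤ (1 + u + τ) ^ (k + N + 2) := by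
      have e1 : (1 + u + τ) ^ (k + N + 2) = (1+u+τ)^k * ((1+u+τ)^N * (1+u+τ)^2) := by
        ring
      rw [e1]
      have h1 : (1 + τ) ^ k ≤ (1 + u + τ) ^ k :=
        pow_le_pow_left₀ (by linarith) (by linarith) k
      have h2 : (1 + u) ^ N ≤ (1 + u + τ) ^ N :=
        pow_le_pow_left₀ (by linarith) (by linarith) N
      have h3 : 1 + τ ^ 2 ≤ (1 + u + τ) ^ 2 := by nlinarith
      have := mul_le_mul h1 (mul_le_mul h2 h3 (by positivity) (by positivity))
        (by positivity) (by positivity)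
      exact this
    have hτabs : |τ| = τ := abs_of_nonneg hτ
    calc ‖F τ * φ (u + τ)‖ = ‖F τ‖ * ‖φ (u + τ)‖ := norm_mul _ _
      _ ≤ (C * (1 + τ) ^ k) * (D₀ / (1 + u + τ) ^ (k + N + 2)) := by
          apply mul_le_mul _ hφ (norm_nonneg _) (by positivity)
          simpa [hτabs] using hFk τ
      _ ≤ (C * (1 + τ) ^ k) * (D₀ / ((1 + τ) ^ k * ((1 + u) ^ N * (1 + τ ^ 2)))) := by
          gcongr
      _ = (C * D₀ * ((1 + u) ^ N)⁻¹) * (1 + τ ^ 2)⁻¹ := by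
          have hτk : ((1:ℝ)+τ)^k ≠ 0 := by positivity
          have huN : ((1:ℝ)+u)^N ≠ 0 := by positivity
          have hτ2 : (1:ℝ)+τ^2 ≠ 0 := by positivity
          field_simp
  -- integrability of the integrand of Ψ
  have hmeasτ : ∀ u : ℝ, AEStronglyMeasurable (fun τ => F τ * φ (u + τ))
      (volume.restrict (Set.Ioi 0)) := fun u =>
    ((hF.mul (φ.continuous.comp (continuous_const.add continuous_id))).aestronglyMeasurable).restrict
  have hdomint : ∀ c : ℝ, Integrable (fun τ : ℝ => c * (1 + τ ^ 2)⁻¹)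
      (volume.restrict (Set.Ioi 0)) := fun c =>
    ((integrable_inv_one_add_sq.const_mul c).integrableOn (s := Set.Ioi 0))
  have hΨint : ∀ u : ℝ, 0 ≤ u → IntegrableOn (fun τ => F τ * φ (u + τ)) (Set.Ioi 0) := by
    intro u hu
    obtain ⟨D, hD, hbd⟩ := hBptwise 0
    refine (hdomint (D)).mono' (hmeasτ u) ?_
    filter_upwards [ae_restrict_mem measurableSet_Ioi] with τ hτ
    have := hbd u hu τ (le_of_lt hτ)
    simpa using this
  -- norm bound for Ψ
  have hΨbd : ∀ N : ℕ, ∃ E : ℝ, 0 < E ∧ ∀ u : ℝ, 0 ≤ u →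
      ‖Ψ u‖ ≤ E * ((1 + u) ^ N)⁻¹ := by
    intro N
    obtain ⟨D, hD, hbd⟩ := hBptwise N
    set I₀ : ℝ := ∫ τ in Set.Ioi (0:ℝ), (1 + τ ^ 2)⁻¹ with hI₀
    have hI₀nn : 0 ≤ I₀ := integral_nonneg fun τ => by positivity
    refine ⟨D * (I₀ + 1), by positivity, fun u hu => ?_⟩
    have hb : ‖Ψ u‖ ≤ ∫ τ in Set.Ioi (0:ℝ), (D * ((1+u)^N)⁻¹) * (1 + τ ^ 2)⁻¹ := by
      apply norm_integral_le_of_norm_le (hdomint _)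
      filter_upwards [ae_restrict_mem measurableSet_Ioi] with τ hτ
      exact hbd u hu τ hτ.le
    rw [integral_const_mul] at hb
    have hv : (0:ℝ) ≤ ((1+u)^N)⁻¹ := by positivity
    calc ‖Ψ u‖ ≤ D * ((1+u)^N)⁻¹ * I₀ := hb
      _ = (D * I₀) * ((1+u)^N)⁻¹ := by ring
      _ ≤ (D * (I₀ + 1)) * ((1 + u) ^ N)⁻¹ := by
          apply mul_le_mul_of_nonneg_right _ hv
          nlinarith
      _ = D * (I₀ + 1) * ((1 + u) ^ N)⁻¹ := rfl
  -- continuity of Ψ on (0,∞)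
  have hΨcont : ContinuousOn Ψ (Set.Ioi 0) := by
    intro u₀ hu₀
    apply ContinuousAt.continuousWithinAt
    obtain ⟨D, hD, hbd⟩ := hBptwise 0
    apply continuousAt_of_dominated (bound := fun τ => D * (1 + τ ^ 2)⁻¹)
    · filter_upwards with u; exact hmeasτ u
    · filter_upwards [isOpen_Ioi.eventually_mem hu₀] with u hu
      filter_upwards [ae_restrict_mem measurableSet_Ioi] with τ hτ
      have := hbd u (le_of_lt hu) τ hτ.le
      simpa using this
    · exact hdomint D
    · exact ae_of_all _ fun τ =>
        (continuous_const.mul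
          (φ.continuous.comp (continuous_id.add continuous_const))).continuousAt
  have hΨloc : LocallyIntegrableOn Ψ (Set.Ioi 0) :=
    hΨcont.locallyIntegrableOn measurableSet_Ioi
  -- Mellin differentiability
  have hmellin : ∀ s : ℂ, 0 < s.re → DifferentiableAt ℂ (mellin Ψ) s := by
    intro s hs
    obtain ⟨E₀, hE₀, hbd₀⟩ := hΨbd 0
    set N : ℕ := ⌈s.re + 1⌉₊ with hN
    obtain ⟨E, hE, hbdN⟩ := hΨbd N
    apply mellin_differentiableAt_of_isBigO_rpow (a := s.re + 1) (b := 0) hΨloc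
    · rw [Asymptotics.isBigO_iff]
      refine ⟨E, ?_⟩
      filter_upwards [Filter.eventually_ge_atTop (1:ℝ)] with u hu
      have hupos : (0:ℝ) < u := by linarith
      have h1 : ‖Ψ u‖ ≤ E * ((1 + u) ^ N)⁻¹ := hbdN u (by linarith)
      have h2 : u ^ (s.re + 1) ≤ (1 + u) ^ N := by
        calc u ^ (s.re+1) ≤ u ^ (N:ℝ) :=
              Real.rpow_le_rpow_of_exponent_le hu (Nat.le_ceil _)
          _ = u ^ N := Real.rpow_natCast u N
          _ ≤ (1+u) ^ N := pow_le_pow_left₀ (by linarith) (by linarith) N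
      have hrpos : (0:ℝ) < u ^ (s.re + 1) := Real.rpow_pos_of_pos hupos _
      have hnorm : ‖u ^ (-(s.re+1))‖ = (u ^ (s.re+1))⁻¹ := by
        rw [Real.rpow_neg hupos.le, Real.norm_eq_abs, abs_of_nonneg (by positivity)]
      rw [hnorm]
      calc ‖Ψ u‖ ≤ E * ((1 + u) ^ N)⁻¹ := h1
        _ ≤ E * (u ^ (s.re+1))⁻¹ := by gcongr
    · linarith
    · rw [Asymptotics.isBigO_iff]
      refine ⟨E₀, ?_⟩
      filter_upwards [self_mem_nhdsWithin] with u hu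
      have hb := hbd₀ u (le_of_lt hu)
      simp only [pow_zero, inv_one, mul_one] at hb
      simpa [Real.rpow_zero] using hb
    · exact hs
  -- the Fubini identity
  have hkey : ∀ γ : ℝ, 0 < γ →
      (∫ x in Set.Ioi (0:ℝ),
        (∫ τ in (0:ℝ)..x, (((x - τ) ^ (γ - 1) : ℝ) : ℂ) * F τ) * φ x)
        = mellin Ψ (γ : ℂ) := by
    intro γ hγ
    have hγ1 : (-1:ℝ) < γ - 1 := by linarith
    set S : Set (ℝ × ℝ) := {p | 0 < p.2 ∧ p.2 < p.1} with hSdef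
    have hSmeas : MeasurableSet S :=
      (measurableSet_lt measurable_const measurable_snd).inter
        (measurableSet_lt measurable_snd measurable_fst)
    set f0 : ℝ × ℝ → ℂ :=
      fun p => ((p.2 ^ (γ-1) : ℝ) : ℂ) * F (p.1 - p.2) * φ p.1 with hf0def
    set W : ℝ × ℝ → ℂ := S.indicator f0 with hWdef
    have hf0meas : Measurable f0 := by
      apply Measurable.mul
      · apply Measurable.mul
        · exact Complex.measurable_ofReal.comp (measurable_snd.pow_const (γ-1))
        · exact hF.measurable.comp (measurable_fst.sub measurable_snd)
      · exact φ.continuous.measurable.comp measurable_fst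
    have hWmeas : AEStronglyMeasurable W (volume : Measure (ℝ × ℝ)) :=
      (hf0meas.indicator hSmeas).aestronglyMeasurable
    have hslice : ∀ x : ℝ, (fun u => W (x, u)) =
        (Set.Ioo 0 x).indicator (fun u => ((u ^ (γ-1) : ℝ) : ℂ) * F (x - u) * φ x) := by
      intro x
      funext u
      simp only [hWdef]
      by_cases h : 0 < u ∧ u < x
      · rw [Set.indicator_of_mem (show (x,u) ∈ S from h),
          Set.indicator_of_mem (show u ∈ Set.Ioo 0 x from ⟨h.1, h.2⟩)]
      · rw [Set.indicator_of_notMem (show ¬ (x,u) ∈ S from h),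
          Set.indicator_of_notMem (by simpa [Set.mem_Ioo] using h)]
    have hrpowInt : ∀ x : ℝ, IntegrableOn (fun u : ℝ => u ^ (γ-1)) (Set.Ioo 0 x) := by
      intro x
      rcases le_or_gt x 0 with hx | hx
      · rw [Set.Ioo_eq_empty (by simpa using hx.not_gt)]
        exact integrableOn_empty
      · have h1 : IntervalIntegrable (fun u : ℝ => u ^ (γ-1)) volume 0 x :=
          intervalIntegral.intervalIntegrable_rpow' hγ1
        rwa [intervalIntegrable_iff_integrableOn_Ioo_of_le hx.le] at h1
    have hFb : ∀ x : ℝ, 0 < x → ∀ u ∈ Set.Ioo (0:ℝ) x, ‖F (x - u)‖ ≤ C * (1+x)^k := by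
      intro x hx u hu
      have h1 : |x - u| ≤ x := by
        rw [abs_of_nonneg (by linarith [hu.2] : (0:ℝ) ≤ x - u)]
        linarith [hu.1]
      calc ‖F (x-u)‖ ≤ C * (1+|x-u|)^k := hFk _
        _ ≤ C * (1+x)^k := by
            have h2 : (1+|x-u|)^k ≤ (1+x)^k :=
              pow_le_pow_left₀ (by positivity) (by linarith) k
            exact mul_le_mul_of_nonneg_left h2 hC.le
    have hnormf0 : ∀ x : ℝ, 0 < x → ∀ u ∈ Set.Ioo (0:ℝ) x,
        ‖((u^(γ-1):ℝ):ℂ) * F (x-u) * φ x‖ ≤ u^(γ-1) * (C * (1+x)^k * ‖φ x‖) := by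
      intro x hx u hu
      have h0u : (0:ℝ) < u := hu.1
      have heq : ‖((u^(γ-1):ℝ):ℂ) * F (x-u) * φ x‖
          = u^(γ-1) * (‖F (x-u)‖ * ‖φ x‖) := by
        rw [norm_mul, norm_mul, Complex.norm_real, Real.norm_eq_abs,
          abs_of_nonneg (Real.rpow_nonneg h0u.le _), mul_assoc]
      rw [heq]
      apply mul_le_mul_of_nonneg_left _ (Real.rpow_nonneg h0u.le _)
      exact mul_le_mul_of_nonneg_right (hFb x hx u hu) (norm_nonneg _)
    have hsliceInt : ∀ x : ℝ, Integrable (fun u => W (x, u)) := by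
      intro x
      rw [hslice x, integrable_indicator_iff measurableSet_Ioo]
      rcases le_or_gt x 0 with hx | hx
      · rw [Set.Ioo_eq_empty (by simpa using hx.not_gt)]
        exact integrableOn_empty
      · apply Integrable.mono' ((hrpowInt x).mul_const (C * (1+x)^k * ‖φ x‖))
        · exact (((Complex.measurable_ofReal.comp (measurable_id.pow_const (γ-1))).mul
            (hF.measurable.comp (measurable_const.sub measurable_id))).mul
            measurable_const).aestronglyMeasurable.restrict
        · filter_upwards [ae_restrict_mem measurableSet_Ioo] with u hu
          exact hnormf0 x hx u hu
    have hrpowval : ∀ x : ℝ, 0 < x →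
        (∫ u in Set.Ioo (0:ℝ) x, u ^ (γ-1)) = x ^ γ / γ := by
      intro x hx
      have hg : γ - 1 + 1 = γ := by ring
      have h1 : (∫ u in (0:ℝ)..x, u ^ (γ-1)) = x ^ γ / γ := by
        rw [integral_rpow (Or.inl hγ1), hg, Real.zero_rpow hγ.ne', sub_zero]
      rw [← h1, intervalIntegral.integral_of_le hx.le, integral_Ioc_eq_integral_Ioo]
    set B : ℝ → ℝ := (Set.Ioi (0:ℝ)).indicator
      (fun x => (C * (1+x)^k * ‖φ x‖) * (x ^ γ / γ)) with hBdef
    have hWnormbd : ∀ x : ℝ, (∫ u, ‖W (x, u)‖) ≤ B x := by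
      intro x
      rcases le_or_gt x 0 with hx | hx
      · have hzero : (fun u => W (x,u)) = fun _ => 0 := by
          rw [hslice x, Set.Ioo_eq_empty (by simpa using hx.not_gt)]
          simp
        have hBx : B x = 0 :=
          Set.indicator_of_notMem (by simpa using hx.not_gt) _
        have hz : (∫ u, ‖W (x, u)‖) = 0 := by
          have h0 : ∀ u : ℝ, W (x, u) = 0 := fun u => congrFun hzero u
          simp [h0]
        rw [hz, hBx]
      · have hBx : B x = (C * (1+x)^k * ‖φ x‖) * (x ^ γ / γ) :=
          Set.indicator_of_mem hx _
        have hnorm_eq : (fun u => ‖W (x,u)‖) = (Set.Ioo (0:ℝ) x).indicator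
            (fun u => ‖((u^(γ-1):ℝ):ℂ) * F (x-u) * φ x‖) := by
          funext u
          rw [congrFun (hslice x) u]
          exact norm_indicator_eq_indicator_norm _ _
        rw [hBx]
        calc (∫ u, ‖W (x, u)‖)
            = ∫ u in Set.Ioo (0:ℝ) x, ‖((u^(γ-1):ℝ):ℂ) * F (x-u) * φ x‖ := by
              rw [hnorm_eq, integral_indicator measurableSet_Ioo]
          _ ≤ ∫ u in Set.Ioo (0:ℝ) x, u^(γ-1) * (C * (1+x)^k * ‖φ x‖) := by
              apply integral_mono_of_nonneg (ae_of_all _ fun u => norm_nonneg _)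
                ((hrpowInt x).mul_const _)
              filter_upwards [ae_restrict_mem measurableSet_Ioo] with u hu
              exact hnormf0 x hx u hu
          _ = (x ^ γ / γ) * (C * (1+x)^k * ‖φ x‖) := by
              rw [integral_mul_const, hrpowval x hx]
          _ = (C * (1+x)^k * ‖φ x‖) * (x ^ γ / γ) := by ring
    have hBint : Integrable B := by
      set m : ℕ := k + ⌈γ⌉₊ with hm
      apply Integrable.mono' ((schwartz_poly_integrable φ m).const_mul (C / γ))
      · apply AEStronglyMeasurable.indicator _ measurableSet_Ioi
        apply Measurable.aestronglyMeasurable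
        apply Measurable.mul
        · exact ((measurable_const.mul
            ((measurable_const.add measurable_id).pow_const k)).mul
            φ.continuous.measurable.norm)
        · exact (measurable_id.pow_const γ).div_const γ
      · apply ae_of_all
        intro x
        rcases le_or_gt x 0 with hx | hx
        · have hBx : B x = 0 :=
            Set.indicator_of_notMem (by simpa using hx.not_gt) _
          rw [hBx, norm_zero]
          positivity
        · have hBx : B x = (C * (1+x)^k * ‖φ x‖) * (x ^ γ / γ) :=
            Set.indicator_of_mem hx _
          have hxabs : |x| = x := abs_of_pos hx
          have hxg : x ^ γ ≤ (1+x) ^ (⌈γ⌉₊ : ℕ) := by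
            calc x ^ γ ≤ (1+x) ^ γ :=
                  Real.rpow_le_rpow hx.le (by linarith) hγ.le
              _ ≤ (1+x) ^ ((⌈γ⌉₊ : ℕ) : ℝ) :=
                  Real.rpow_le_rpow_of_exponent_le (by linarith) (Nat.le_ceil _)
              _ = (1+x) ^ (⌈γ⌉₊ : ℕ) := Real.rpow_natCast _ _
          have hBnn : 0 ≤ B x := by
            rw [hBx]
            have : (0:ℝ) ≤ x ^ γ := Real.rpow_nonneg hx.le _
            positivity
          rw [Real.norm_eq_abs, abs_of_nonneg hBnn, hBx]
          have h1 : (1+x)^k * x ^ γ ≤ (1+x)^m := by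
            rw [hm, pow_add]
            exact mul_le_mul_of_nonneg_left hxg (by positivity)
          calc (C * (1+x)^k * ‖φ x‖) * (x ^ γ / γ)
              = (C / γ) * (((1+x)^k * x ^ γ) * ‖φ x‖) := by ring
            _ ≤ (C / γ) * ((1+x)^m * ‖φ x‖) := by
                apply mul_le_mul_of_nonneg_left _ (by positivity)
                exact mul_le_mul_of_nonneg_right h1 (norm_nonneg _)
            _ = (C / γ) * ((1+|x|)^m * ‖φ x‖) := by rw [hxabs]
    have hWint : Integrable W ((volume : Measure ℝ).prod volume) := by
      refine (integrable_prod_iff ?_).2 ⟨?_, ?_⟩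
      · rw [← MeasureTheory.Measure.volume_eq_prod]; exact hWmeas
      · exact ae_of_all _ fun x => hsliceInt x
      · apply Integrable.mono' hBint
        · have hWm2 : AEStronglyMeasurable W ((volume : Measure ℝ).prod volume) := by
            rw [← MeasureTheory.Measure.volume_eq_prod]; exact hWmeas
          exact hWm2.norm.integral_prod_right'
        · apply ae_of_all
          intro x
          rw [Real.norm_eq_abs, abs_of_nonneg (integral_nonneg fun u => norm_nonneg _)]
          exact hWnormbd x
    have hinner : ∀ x ∈ Set.Ioi (0:ℝ),
        (∫ τ in (0:ℝ)..x, (((x - τ) ^ (γ - 1) : ℝ) : ℂ) * F τ) * φ x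
          = ∫ u, W (x, u) := by
      intro x hx
      rw [Set.mem_Ioi] at hx
      have h1 : (∫ τ in (0:ℝ)..x, (((x - τ) ^ (γ - 1) : ℝ) : ℂ) * F τ)
          = ∫ u in (0:ℝ)..x, ((u ^ (γ - 1) : ℝ) : ℂ) * F (x - u) := by
        have h := intervalIntegral.integral_comp_sub_left (a := (0:ℝ)) (b := x)
          (fun u => ((u ^ (γ - 1) : ℝ) : ℂ) * F (x - u)) x
        simp only [sub_self, sub_zero, sub_sub_cancel] at h
        exact h
      rw [h1, ← intervalIntegral.integral_mul_const,
        intervalIntegral.integral_of_le hx.le, integral_Ioc_eq_integral_Ioo,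
        ← integral_indicator measurableSet_Ioo]
      rw [hslice x]
    have hzero_x : ∀ x : ℝ, x ≤ 0 → (fun u => W (x, u)) = fun _ => 0 := by
      intro x hx
      rw [hslice x, Set.Ioo_eq_empty (by simpa using hx.not_gt)]
      simp
    have hzero_u : ∀ u : ℝ, u ≤ 0 → (fun x => W (x, u)) = fun _ => 0 := by
      intro u hu
      funext x
      exact Set.indicator_of_notMem (fun h => absurd h.1 (not_lt.2 hu)) _
    have hufix : ∀ u ∈ Set.Ioi (0:ℝ),
        (∫ x, W (x, u)) = ((u ^ (γ-1) : ℝ) : ℂ) * Ψ u := by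
      intro u hu
      rw [Set.mem_Ioi] at hu
      have hxslice : (fun x => W (x, u)) = (Set.Ioi u).indicator
          (fun x => ((u ^ (γ-1):ℝ):ℂ) * (F (x - u) * φ x)) := by
        funext x
        simp only [hWdef]
        by_cases h : u < x
        · rw [Set.indicator_of_mem (show (x,u) ∈ S from ⟨hu, h⟩)
            , Set.indicator_of_mem (show x ∈ Set.Ioi u from h)]
          simp only [hf0def]
          ring
        · rw [Set.indicator_of_notMem (show ¬ (x,u) ∈ S from fun hs => h hs.2),
            Set.indicator_of_notMem (show ¬ x ∈ Set.Ioi u from h)]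
      rw [hxslice, integral_indicator measurableSet_Ioi, integral_const_mul]
      congr 1
      have himg : (fun τ => τ + u) '' Set.Ioi (0:ℝ) = Set.Ioi u := by
        rw [Set.image_add_const_Ioi, zero_add]
      have hemb : MeasurableEmbedding (fun τ : ℝ => τ + u) :=
        (Homeomorph.addRight u).isClosedEmbedding.measurableEmbedding
      have hB := (measurePreserving_add_right volume u).setIntegral_image_emb hemb
        (fun x => F (x - u) * φ x) (Set.Ioi 0)
      rw [himg] at hB
      rw [hB]
      simp only [add_sub_cancel_right]
      apply setIntegral_congr_fun measurableSet_Ioi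
      intro τ _
      show F τ * φ (τ + u) = F τ * φ (u + τ)
      rw [add_comm]
    have hmel : (∫ u in Set.Ioi (0:ℝ), ((u ^ (γ-1):ℝ):ℂ) * Ψ u) = mellin Ψ (γ:ℂ) := by
      simp only [mellin, smul_eq_mul]
      apply setIntegral_congr_fun measurableSet_Ioi
      intro u hu
      rw [Set.mem_Ioi] at hu
      show ((u ^ (γ-1) : ℝ) : ℂ) * Ψ u = (u:ℂ) ^ ((γ:ℂ) - 1) * Ψ u
      congr 1
      rw [Complex.ofReal_cpow hu.le]
      push_cast
      ring_nf
    calc (∫ x in Set.Ioi (0:ℝ),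
          (∫ τ in (0:ℝ)..x, (((x - τ) ^ (γ - 1) : ℝ) : ℂ) * F τ) * φ x)
        = ∫ x in Set.Ioi (0:ℝ), ∫ u, W (x, u) :=
          setIntegral_congr_fun measurableSet_Ioi hinner
      _ = ∫ x, ∫ u, W (x, u) := by
          apply setIntegral_eq_integral_of_forall_compl_eq_zero
          intro x hx
          rw [hzero_x x (not_lt.1 (by simpa using hx))]
          simp
      _ = ∫ u, ∫ x, W (x, u) := integral_integral_swap hWint
      _ = ∫ u in Set.Ioi (0:ℝ), ∫ x, W (x, u) := by
          symm
          apply setIntegral_eq_integral_of_forall_compl_eq_zero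
          intro u hu
          rw [hzero_u u (not_lt.1 (by simpa using hu))]
          simp
      _ = ∫ u in Set.Ioi (0:ℝ), ((u ^ (γ-1) : ℝ) : ℂ) * Ψ u :=
          setIntegral_congr_fun measurableSet_Ioi hufix
      _ = mellin Ψ (γ:ℂ) := hmel
  -- final assembly
  set Wf : ℂ → ℂ := fun s => (Complex.Gamma s)⁻¹ * mellin Ψ s with hWfdef
  have hUopen : IsOpen {s : ℂ | 0 < s.re} :=
    isOpen_lt continuous_const Complex.continuous_re
  have hWdiff : DifferentiableOn ℂ Wf {s : ℂ | 0 < s.re} := by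
    intro s hs
    have hs' : 0 < s.re := hs
    have hne : ∀ m : ℕ, s ≠ -m := by
      intro m hm
      rw [hm] at hs'
      simp only [Complex.neg_re, Complex.natCast_re] at hs'
      have : (0:ℝ) ≤ m := Nat.cast_nonneg m
      linarith
    exact (((Complex.differentiableAt_Gamma s hne).inv
      (Complex.Gamma_ne_zero_of_re_pos hs')).mul (hmellin s hs')).differentiableWithinAt
  have hAn : AnalyticOnNhd ℝ (fun γ : ℝ => Wf (γ : ℂ)) (Set.Ioi 0) := by
    have h1 : AnalyticOnNhd ℂ Wf {s : ℂ | 0 < s.re} := hWdiff.analyticOnNhd hUopen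
    have h2 : AnalyticOnNhd ℝ Wf {s : ℂ | 0 < s.re} := h1.restrictScalars
    intro x hx
    have h3 : AnalyticAt ℝ (fun γ : ℝ => (γ : ℂ)) x := Complex.ofRealCLM.analyticAt x
    exact (h2 (x : ℂ) (by simpa using hx)).comp h3
  have hCD : ContDiffOn ℝ (⊤ : ℕ∞) (fun γ : ℝ => Wf (γ:ℂ)) (Set.Ioi 0) :=
    hAn.contDiffOn (uniqueDiffOn_Ioi 0)
  apply hCD.congr
  intro γ hγ
  rw [Set.mem_Ioi] at hγ
  have e1 : ∀ x τ : ℝ, (((x - τ) ^ (γ - 1) / Real.Gamma γ : ℝ) : ℂ) * F τ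
      = ((Real.Gamma γ : ℂ))⁻¹ * ((((x - τ) ^ (γ - 1) : ℝ) : ℂ) * F τ) := by
    intro x τ
    push_cast
    ring
  simp only [e1, intervalIntegral.integral_const_mul, mul_assoc, integral_const_mul]
  rw [hkey γ hγ]
  simp only [hWfdef]
  rw [Complex.Gamma_ofReal]
end
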